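/- Let I=⟨A,A?,R,R?⟩ be an incomplete argumentation framework, S⊆A∪A? a set of arguments, and σ∈{ad,st,co,gr,pr} a semantics such that NecVer_σ(I,S)=false. Then for every uncertain element e∈A?∪R?: e∈SRE⁺(I,S,(σ,false)) if and only if NecVer_σ(I−{e},S)=true, and e∈SRE⁻(I,S,(σ,false)) if and only if NecVer_σ(I+{e},S)=true. -/
import Mathlib


universe u

/-- An abstract argumentation framework: a set of arguments with an attack relation. -/
structure AF (α : Type u) where
  args : Set α
  att : Set (α × α)

namespace AF

variable {α : Type u}

/-- `S⁺_F`: arguments attacked by `S`. -/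
def plusSet (F : AF α) (S : Set α) : Set α := {a | a ∈ F.args ∧ ∃ b ∈ S, (b, a) ∈ F.att}

/-- `S⁻_F`: arguments attacking `S`. -/
def minusSet (F : AF α) (S : Set α) : Set α := {a | a ∈ F.args ∧ ∃ b ∈ S, (a, b) ∈ F.att}

/-- `S` is conflict-free in `F`. -/
def confFree (F : AF α) (S : Set α) : Prop := S ∩ F.plusSet S = ∅

/-- `S` defends `a` in `F`: every attacker of `a` is attacked by `S`. -/
def defends (F : AF α) (S : Set α) (a : α) : Prop := ∀ b, (b, a) ∈ F.att → b ∈ F.plusSet S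

/-- The characteristic function `Γ_F(S)`: arguments defended by `S`. -/
def Γ (F : AF α) (S : Set α) : Set α := {a | a ∈ F.args ∧ F.defends S a}

/-- Admissible: conflict-free and self-defending. -/
def isAd (F : AF α) (S : Set α) : Prop := S ⊆ F.args ∧ F.confFree S ∧ S ⊆ F.Γ S

/-- Stable: conflict-free and attacking exactly the outside. -/
def isSt (F : AF α) (S : Set α) : Prop := S ⊆ F.args ∧ F.confFree S ∧ F.plusSet S = F.args \ S

/-- Complete: admissible and containing all defended arguments. -/
def isCo (F : AF α) (S : Set α) : Prop := F.isAd S ∧ F.Γ S ⊆ S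

/-- Grounded: ⊆-minimal complete. -/
def isGr (F : AF α) (S : Set α) : Prop := F.isCo S ∧ ∀ T, F.isCo T → T ⊆ S → T = S

/-- Preferred: ⊆-maximal admissible. -/
def isPr (F : AF α) (S : Set α) : Prop := F.isAd S ∧ ∀ T, F.isAd T → S ⊆ T → S = T

end AF

/-- The five common semantics. -/
inductive Sem : Type
  | ad | st | co | gr | pr
deriving DecidableEq

/-- `S` is a `σ`-extension of `F`. -/
def extOf {α : Type u} : Sem → AF α → Set α → Prop
  | .ad => AF.isAd
  | .st => AF.isSt
  | .co => AF.isCo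
  | .gr => AF.isGr
  | .pr => AF.isPr

/-- An incomplete argumentation framework (data part). -/
structure IAF (α : Type u) where
  A : Set α
  Aq : Set α
  R : Set (α × α)
  Rq : Set (α × α)

namespace IAF

variable {α : Type u}

/-- Well-formedness: `A`,`A?` disjoint; `R`,`R?` disjoint subsets of `(A∪A?)×(A∪A?)`. -/
def WF (I : IAF α) : Prop :=
  Disjoint I.A I.Aq ∧ Disjoint I.R I.Rq ∧
  I.R ⊆ (I.A ∪ I.Aq) ×ˢ (I.A ∪ I.Aq) ∧
  I.Rq ⊆ (I.A ∪ I.Aq) ×ˢ (I.A ∪ I.Aq)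

/-- `cert(I)`: the AF projected on the certain part. -/
def cert (I : IAF α) : AF α := ⟨I.A, I.R ∩ I.A ×ˢ I.A⟩

/-- `I'` is a partial completion of `I`. -/
def PartOf (I' I : IAF α) : Prop :=
  I'.WF ∧ I.A ⊆ I'.A ∧ I'.A ⊆ I.A ∪ I.Aq ∧
  I.R ∩ (I'.A ∪ I'.Aq) ×ˢ (I'.A ∪ I'.Aq) ⊆ I'.R ∧
  I'.R ⊆ I.R ∪ I.Rq ∧ I'.Aq ⊆ I.Aq ∧ I'.Rq ⊆ I.Rq

/-- `F` is a completion of `I`. -/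
def IsCompletion (I : IAF α) (F : AF α) : Prop := ∃ I' : IAF α, I'.PartOf I ∧ F = I'.cert

/-- `I + R₀` for a set of uncertain attacks. -/
def addR (I : IAF α) (R0 : Set (α × α)) : IAF α := ⟨I.A, I.Aq, I.R ∪ R0, I.Rq \ R0⟩

/-- `I − R₀` for a set of uncertain attacks. -/
def subR (I : IAF α) (R0 : Set (α × α)) : IAF α := ⟨I.A, I.Aq, I.R, I.Rq \ R0⟩

/-- `I + A₀` for a set of uncertain arguments. -/
def addA (I : IAF α) (A0 : Set α) : IAF α := ⟨I.A ∪ A0, I.Aq \ A0, I.R, I.Rq⟩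

/-- `I − A₀` for a set of uncertain arguments. -/
def subA (I : IAF α) (A0 : Set α) : IAF α :=
  ⟨I.A, I.Aq \ A0,
   I.R \ {p | p ∈ I.R ∪ I.Rq ∧ (p.1 ∈ A0 ∨ p.2 ∈ A0)},
   I.Rq \ {p | p ∈ I.R ∪ I.Rq ∧ (p.1 ∈ A0 ∨ p.2 ∈ A0)}⟩

/-- `S⁺_I`. -/
def plusI (I : IAF α) (S : Set α) : Set α := {a | a ∈ I.A ∪ I.Aq ∧ ∃ b ∈ S, (b, a) ∈ I.R}

/-- `S⁻_I`. -/
def minusI (I : IAF α) (S : Set α) : Set α := {a | a ∈ I.A ∪ I.Aq ∧ ∃ b ∈ S, (a, b) ∈ I.R}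

/-- `S^∼_I`. -/
def simI (I : IAF α) (S : Set α) : Set α :=
  {a | a ∈ I.A ∪ I.Aq ∧ ∀ b ∈ S, (b, a) ∉ I.R ∪ I.Rq}

end IAF

/-- An element of an IAF: either an argument or an attack. -/
inductive Elem (α : Type u) : Type u
  | arg (a : α)
  | att (r : α × α)

/-- `e` is an uncertain element of `I`, i.e. `e ∈ A? ∪ R?`. -/
def IAF.isUnc {α : Type u} (I : IAF α) : Elem α → Prop
  | .arg a => a ∈ I.Aq
  | .att r => r ∈ I.Rq

/-- `I + {e}`. -/
def IAF.addE {α : Type u} (I : IAF α) : Elem α → IAF α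
  | .arg a => I.addA {a}
  | .att r => I.addR {r}

/-- `I − {e}`. -/
def IAF.subE {α : Type u} (I : IAF α) : Elem α → IAF α
  | .arg a => I.subA {a}
  | .att r => I.subR {r}

/-- `e` is the unique uncertain element of `I`, i.e. `A? ∪ R? = {e}`. -/
def onlyUnc {α : Type u} (I : IAF α) : Elem α → Prop
  | .arg a => I.Aq = {a} ∧ I.Rq = ∅
  | .att r => I.Aq = ∅ ∧ I.Rq = {r}

/-- A verification status: a semantics together with true/false. -/
abbrev VStatus := Sem × Bool

/-- `S` has verification status `j` in the AF `F`. -/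
def hasStatus {α : Type u} (F : AF α) (S : Set α) (j : VStatus) : Prop :=
  cond j.2 (extOf j.1 F S) (¬ extOf j.1 F S)

/-- `S` is stable-`j` w.r.t. `I`. -/
def IAF.stableJ {α : Type u} (I : IAF α) (S : Set α) (j : VStatus) : Prop :=
  ∀ F, I.IsCompletion F → hasStatus F S j

/-- `S` is stable-`σ` w.r.t. `I`. -/
def IAF.stableSem {α : Type u} (I : IAF α) (S : Set α) (σ : Sem) : Prop :=
  I.stableJ S (σ, true) ∨ I.stableJ S (σ, false)

/-- `RE⁺(I,S,j)`: uncertain elements whose addition is `j`-relevant for `S` w.r.t. `I`. -/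
def REplus {α : Type u} (I : IAF α) (S : Set α) (j : VStatus) : Set (Elem α) :=
  {e | I.isUnc e ∧ ∃ I' : IAF α, I'.PartOf I ∧ onlyUnc I' e ∧
    hasStatus (I'.addE e).cert S j ∧ ¬ hasStatus (I'.subE e).cert S j}

/-- `RE⁻(I,S,j)`: uncertain elements whose removal is `j`-relevant for `S` w.r.t. `I`. -/
def REminus {α : Type u} (I : IAF α) (S : Set α) (j : VStatus) : Set (Elem α) :=
  {e | I.isUnc e ∧ ∃ I' : IAF α, I'.PartOf I ∧ onlyUnc I' e ∧
    hasStatus (I'.subE e).cert S j ∧ ¬ hasStatus (I'.addE e).cert S j}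

/-- `e` is `σ`-irrelevant for `S` w.r.t. `I`. -/
def irrelevant {α : Type u} (I : IAF α) (S : Set α) (σ : Sem) (e : Elem α) : Prop :=
  e ∉ REplus I S (σ, true) ∧ e ∉ REminus I S (σ, true) ∧
  e ∉ REplus I S (σ, false) ∧ e ∉ REminus I S (σ, false)

/-- `PosVer_σ(I,S) = true`. -/
def PosVer {α : Type u} (σ : Sem) (I : IAF α) (S : Set α) : Prop :=
  ∃ F, I.IsCompletion F ∧ extOf σ F S

/-- `NecVer_σ(I,S) = true`. -/
def NecVer {α : Type u} (σ : Sem) (I : IAF α) (S : Set α) : Prop :=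
  ∀ F, I.IsCompletion F → extOf σ F S

/-- `SRE⁺(I,S,j)`: uncertain elements whose addition is strongly `j`-relevant. -/
def SREplus {α : Type u} (I : IAF α) (S : Set α) (j : VStatus) : Set (Elem α) :=
  {e | I.isUnc e ∧ ∀ I' : IAF α, I'.PartOf (I.subE e) → ¬ I'.stableJ S j}

/-- `SRE⁻(I,S,j)`: uncertain elements whose removal is strongly `j`-relevant. -/
def SREminus {α : Type u} (I : IAF α) (S : Set α) (j : VStatus) : Set (Elem α) :=
  {e | I.isUnc e ∧ ∀ I' : IAF α, I'.PartOf (I.addE e) → ¬ I'.stableJ S j}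

/-- The `OutRel(I,S,(a,b))` predicate. -/
def OutRel {α : Type u} (I : IAF α) (S : Set α) (r : α × α) : Prop :=
  (I.minusI {r.2} \ {r.1}) ∩ I.simI S = ∅ ∧
  PosVer Sem.co
    ((I.addR {p | p ∈ I.Rq ∧ p.1 ∈ S ∧ p.2 ∈ I.minusI {r.2} \ {r.1}}).subR
      {p | p ∈ I.Rq ∧ p.1 ≠ r.1 ∧ p.2 = r.2}) S


section AuxStmt13

variable {α : Type u}

/-- Fully resolve an IAF: no uncertain parts. -/
def resolveIAF (I : IAF α) : IAF α := ⟨I.A, ∅, I.R ∩ I.A ×ˢ I.A, ∅⟩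

lemma resolve_partOf (I : IAF α) : (resolveIAF I).PartOf I := by
  refine ⟨⟨Set.disjoint_empty _, Set.disjoint_empty _, ?_, ?_⟩, subset_rfl,
    Set.subset_union_left, ?_, ?_, Set.empty_subset _, Set.empty_subset _⟩
  · intro p hp
    simp only [resolveIAF, Set.mem_inter_iff, Set.mem_prod] at hp ⊢
    exact ⟨Or.inl hp.2.1, Or.inl hp.2.2⟩
  · intro p hp; exact hp.elim
  · intro p hp
    simp only [resolveIAF, Set.union_empty] at hp ⊢
    exact hp
  · intro p hp; exact Or.inl hp.1

lemma partOf_trans {I'' I' I : IAF α} (h2 : I''.PartOf I') (h1 : I'.PartOf I) :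
    I''.PartOf I := by
  obtain ⟨wf2, a2, b2, c2, d2, e2, f2⟩ := h2
  obtain ⟨wf1, a1, b1, c1, d1, e1, f1⟩ := h1
  refine ⟨wf2, a1.trans a2, ?_, ?_, ?_, e2.trans e1, f2.trans f1⟩
  · intro x hx
    rcases b2 hx with h | h
    · exact b1 h
    · exact Or.inr (e1 h)
  · intro p hp
    have hmem : p ∈ (I'.A ∪ I'.Aq) ×ˢ (I'.A ∪ I'.Aq) := by
      have hsub : I''.A ∪ I''.Aq ⊆ I'.A ∪ I'.Aq := by
        intro x hx
        rcases hx with h | h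
        · exact b2 h
        · exact Or.inr (e2 h)
      exact ⟨hsub hp.2.1, hsub hp.2.2⟩
    exact c2 ⟨c1 ⟨hp.1, hmem⟩, hp.2⟩
  · intro p hp
    rcases d2 hp with h | h
    · rcases d1 h with h' | h'
      · exact Or.inl h'
      · exact Or.inr h'
    · exact Or.inr (f1 h)

lemma cert_of_partOf_resolve {K I : IAF α} (hK : K.PartOf (resolveIAF I)) :
    K.cert = I.cert := by
  obtain ⟨wf, a1, b1, c1, d1, e1, f1⟩ := hK
  have hAq : K.Aq = ∅ := Set.subset_empty_iff.mp e1
  have hA : K.A = I.A := by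
    apply Set.Subset.antisymm
    · intro x hx
      rcases b1 hx with h | h
      · exact h
      · exact h.elim
    · exact a1
  have hR : K.R ∩ K.A ×ˢ K.A = I.R ∩ I.A ×ˢ I.A := by
    apply Set.Subset.antisymm
    · intro p hp
      rcases d1 hp.1 with h | h
      · exact h
      · exact h.elim
    · intro p hp
      have hsq : p ∈ (K.A ∪ K.Aq) ×ˢ (K.A ∪ K.Aq) := by
        rw [hAq, Set.union_empty, hA]
        exact ⟨hp.2.1, hp.2.2⟩
      refine ⟨c1 ⟨hp, hsq⟩, ?_, ?_⟩
      · rw [hA]; exact hp.2.1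
      · rw [hA]; exact hp.2.2
  rw [hA] at hR
  simp only [IAF.cert, hA, hR]

lemma resolve_completion (I : IAF α) : I.IsCompletion (resolveIAF I).cert :=
  ⟨_, resolve_partOf I, rfl⟩

lemma key_stmt13 (J : IAF α) (S : Set α) (σ : Sem) :
    (∀ I' : IAF α, I'.PartOf J → ¬ I'.stableJ S (σ, false)) ↔ NecVer σ J S := by
  constructor
  · intro h F hF
    obtain ⟨I'', hI'', rfl⟩ := hF
    have hres : (resolveIAF I'').PartOf J := partOf_trans (resolve_partOf I'') hI''
    have hns := h _ hres
    simp only [IAF.stableJ, hasStatus, cond, not_forall] at hns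
    obtain ⟨G, hG, hGσ⟩ := hns
    obtain ⟨K, hK, rfl⟩ := hG
    rw [cert_of_partOf_resolve hK] at hGσ
    exact not_not.mp hGσ
  · intro h I' hI' hst
    have h1 := hst _ (resolve_completion I')
    have h2 : J.IsCompletion (resolveIAF I').cert :=
      ⟨_, partOf_trans (resolve_partOf I') hI', rfl⟩
    exact h1 (h _ h2)

end AuxStmt13

/-- strong `(σ,false)`-relevance in terms of `NecVer`. -/
theorem stmt13 {α : Type u} (I : IAF α) (S : Set α) (σ : Sem)
    (hWF : I.WF) (hS : S ⊆ I.A ∪ I.Aq)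
    (hnec : ¬ NecVer σ I S) :
    ∀ e : Elem α, I.isUnc e →
      (e ∈ SREplus I S (σ, false) ↔ NecVer σ (I.subE e) S) ∧
      (e ∈ SREminus I S (σ, false) ↔ NecVer σ (I.addE e) S) := by
  intro e he
  constructor
  · constructor
    · rintro ⟨-, h⟩; exact (key_stmt13 _ S σ).mp h
    · intro h; exact ⟨he, (key_stmt13 _ S σ).mpr h⟩
  · constructor
    · rintro ⟨-, h⟩; exact (key_stmt13 _ S σ).mp h
    · intro h; exact ⟨he, (key_stmt13 _ S σ).mpr h⟩
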